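/- Let G be a finite group and α : G × G → ℂˣ a normalized 2-cocycle such that there exists an n-dimensional α-projective representation. Then the class of α in H²(G, ℂˣ) has order dividing n; in particular it is a torsion element. -/
import Mathlib


/-- The subgroup of `ℂˣ`-valued 2-cocycles on a group `G`. -/
def cocycles2 (G : Type*) [Group G] : Subgroup (G → G → ℂˣ) where
  carrier := {a | ∀ g h k : G, a g h * a (g * h) k = a g (h * k) * a h k}
  one_mem' := by intro g h k; simp
  mul_mem' := by
    intro a b ha hb g h k
    have Ha := ha g h k
    have Hb := hb g h k
    simp only [Pi.mul_apply]
    rw [mul_mul_mul_comm, Ha, Hb, mul_mul_mul_comm]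
  inv_mem' := by
    intro a ha g h k
    have Ha := ha g h k
    simp only [Pi.inv_apply]
    rw [← mul_inv, ← mul_inv, Ha]

/-- The subgroup of `ℂˣ`-valued 2-coboundaries on a group `G`. -/
def coboundaries2 (G : Type*) [Group G] : Subgroup (G → G → ℂˣ) where
  carrier := {a | ∃ f : G → ℂˣ, ∀ g h : G, a g h = f g * f h * (f (g * h))⁻¹}
  one_mem' := ⟨1, by intro g h; simp⟩
  mul_mem' := by
    rintro a b ⟨f, hf⟩ ⟨f', hf'⟩
    refine ⟨f * f', fun g h => ?_⟩
    simp only [Pi.mul_apply]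
    rw [hf g h, hf' g h]
    simp only [Pi.mul_apply, mul_inv]
    simp [mul_assoc, mul_comm, mul_left_comm]
  inv_mem' := by
    rintro a ⟨f, hf⟩
    refine ⟨f⁻¹, fun g h => ?_⟩
    simp only [Pi.inv_apply]
    rw [hf g h]
    simp [mul_inv, mul_assoc, mul_comm, mul_left_comm]

/-- The `|G|`-th power of any cocycle is a coboundary. -/
lemma pow_card_mem_coboundaries2 {G : Type*} [Group G] [Fintype G] (α : G → G → ℂˣ)
    (hcocycle : ∀ g h k : G, α g h * α (g * h) k = α g (h * k) * α h k) :
    α ^ Fintype.card G ∈ coboundaries2 G := by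
  refine ⟨fun g => ∏ k, α g k, fun g h => ?_⟩
  have h1 : ∏ k, (α g h * α (g * h) k) = ∏ k, (α g (h * k) * α h k) :=
    Finset.prod_congr rfl fun k _ => hcocycle g h k
  simp only [Finset.prod_mul_distrib, Finset.prod_const] at h1
  have h2 : ∏ k, α g (h * k) = ∏ k, α g k :=
    Fintype.prod_equiv (Equiv.mulLeft h) _ _ fun k => rfl
  rw [h2] at h1
  simp only [Pi.pow_apply]
  rw [eq_mul_inv_iff_mul_eq]
  exact h1

/-- If a normalized 2-cocycle `α` on a finite group `G` admits an
`n`-dimensional `α`-projective representation, then its class in `H²(G, ℂˣ)`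
(cocycles modulo coboundaries) has order dividing `n`; in particular it is torsion. -/
theorem stmt_6 {G : Type*} [Group G] [Finite G] (α : G → G → ℂˣ)
    (hcocycle : ∀ g h k : G, α g h * α (g * h) k = α g (h * k) * α h k)
    (hnorm₁ : ∀ g : G, α 1 g = 1) (hnorm₂ : ∀ g : G, α g 1 = 1)
    (n : ℕ) (ρ : G → GL (Fin n) ℂ)
    (hρ : ∀ g h : G, ((ρ g : Matrix (Fin n) (Fin n) ℂ) * (ρ h : Matrix (Fin n) (Fin n) ℂ)) =
      (α g h : ℂ) • (ρ (g * h) : Matrix (Fin n) (Fin n) ℂ)) :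
    orderOf (QuotientGroup.mk (s := (coboundaries2 G).subgroupOf (cocycles2 G))
        (⟨α, hcocycle⟩ : cocycles2 G)) ∣ n ∧
      IsOfFinOrder (QuotientGroup.mk (s := (coboundaries2 G).subgroupOf (cocycles2 G))
        (⟨α, hcocycle⟩ : cocycles2 G)) := by
  classical
  have := Fintype.ofFinite G
  set x : cocycles2 G := ⟨α, hcocycle⟩
  have key : ∀ m : ℕ, α ^ m ∈ coboundaries2 G →
      (QuotientGroup.mk (s := (coboundaries2 G).subgroupOf (cocycles2 G)) x) ^ m = 1 := by
    intro m hm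
    rw [← QuotientGroup.mk_pow, QuotientGroup.eq_one_iff, Subgroup.mem_subgroupOf]
    exact hm
  have hcard : (QuotientGroup.mk (s := (coboundaries2 G).subgroupOf (cocycles2 G)) x)
      ^ Fintype.card G = 1 := key _ (pow_card_mem_coboundaries2 α hcocycle)
  have hfin : IsOfFinOrder
      (QuotientGroup.mk (s := (coboundaries2 G).subgroupOf (cocycles2 G)) x) :=
    isOfFinOrder_iff_pow_eq_one.mpr ⟨Fintype.card G, by positivity, hcard⟩
  refine ⟨?_, hfin⟩
  rcases Nat.eq_zero_or_pos n with hn | hn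
  · simp [hn]
  · apply orderOf_dvd_of_pow_eq_one
    apply key
    refine ⟨fun g => Matrix.GeneralLinearGroup.det (ρ g), fun g h => ?_⟩
    rw [eq_mul_inv_iff_mul_eq]
    apply Units.ext
    have := congrArg Matrix.det (hρ g h)
    rw [Matrix.det_mul, Matrix.det_smul, Fintype.card_fin] at this
    simpa [Matrix.GeneralLinearGroup.val_det_apply, mul_comm] using this.symm
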